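/- Let A be a real n×n matrix and κ a real symmetric positive definite n×n matrix such that Aᵀκ + κA is negative definite (xᵀ(Aᵀκ + κA)x < 0 for all nonzero real x). Then every complex eigenvalue of A has strictly negative real part: if μ ∈ ℂ and v ∈ ℂⁿ is nonzero with (the complexification of) A applied to v equal to μv, then Re(μ) < 0. -/

import Mathlib

/-!
For an eigenpair `(μ, v)`, `v* (Aᵀκ + κA) v = (μ̄ + μ) v* κ v = 2 Re μ · v* κ v`. Writing
`v = x + i y`, the real part of `v* B v` for a real matrix `B` is `xᵀBx + yᵀBy`, so the real
definiteness hypotheses make the left side negative and `v* κ v` have positive real part.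
-/

open Matrix

section

variable {ι : Type*} [Fintype ι]

theorem re_star_dotProduct_map_ofReal_mulVec (B : Matrix ι ι ℝ) (v : ι → ℂ) :
    (star v ⬝ᵥ B.map Complex.ofReal *ᵥ v).re =
      (fun i ↦ (v i).re) ⬝ᵥ B *ᵥ (fun i ↦ (v i).re) +
        (fun i ↦ (v i).im) ⬝ᵥ B *ᵥ (fun i ↦ (v i).im) := by
  simp only [dotProduct, mulVec, Pi.star_apply, map_apply, Finset.mul_sum, Complex.re_sum,
    ← Finset.sum_add_distrib]
  refine Finset.sum_congr rfl fun i _ ↦ Finset.sum_congr rfl fun j _ ↦ ?_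
  simp [Complex.mul_re, Complex.mul_im]

theorem re_star_dotProduct_map_ofReal_mulVec_pos {B : Matrix ι ι ℝ}
    (hB : ∀ x : ι → ℝ, x ≠ 0 → 0 < x ⬝ᵥ B *ᵥ x) {v : ι → ℂ} (hv : v ≠ 0) :
    0 < (star v ⬝ᵥ B.map Complex.ofReal *ᵥ v).re := by
  have hB' : ∀ x : ι → ℝ, 0 ≤ x ⬝ᵥ B *ᵥ x := fun x ↦ by
    rcases eq_or_ne x 0 with rfl | hx
    · simp
    · exact (hB x hx).le
  rw [re_star_dotProduct_map_ofReal_mulVec]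
  by_cases hre : (fun i ↦ (v i).re) = 0
  · have him : (fun i ↦ (v i).im) ≠ 0 := fun him ↦
      hv (funext fun i ↦ Complex.ext (congrFun hre i) (congrFun him i))
    exact add_pos_of_nonneg_of_pos (hB' _) (hB _ him)
  · exact add_pos_of_pos_of_nonneg (hB _ hre) (hB' _)

theorem re_star_dotProduct_map_ofReal_mulVec_neg {B : Matrix ι ι ℝ}
    (hB : ∀ x : ι → ℝ, x ≠ 0 → x ⬝ᵥ B *ᵥ x < 0) {v : ι → ℂ} (hv : v ≠ 0) :
    (star v ⬝ᵥ B.map Complex.ofReal *ᵥ v).re < 0 := by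
  have hpos := re_star_dotProduct_map_ofReal_mulVec_pos (B := -B)
    (fun x hx ↦ by simpa [neg_mulVec] using hB x hx) hv
  rwa [Matrix.map_neg _ Complex.ofReal_neg, neg_mulVec, dotProduct_neg, Complex.neg_re,
    neg_pos] at hpos

end

theorem star_dotProduct_conjTranspose_mul_mulVec_of_eigenvector {ι R : Type*} [Fintype ι]
    [CommRing R] [StarRing R] {A K : Matrix ι ι R} {μ : R} {v : ι → R} (hAv : A *ᵥ v = μ • v) :
    star v ⬝ᵥ (Aᴴ * K + K * A) *ᵥ v = (star μ + μ) * (star v ⬝ᵥ K *ᵥ v) := by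
  rw [add_mulVec, dotProduct_add, ← mulVec_mulVec, ← mulVec_mulVec, dotProduct_mulVec,
    ← star_mulVec, hAv, star_smul, smul_dotProduct, mulVec_smul, dotProduct_smul,
    smul_eq_mul, smul_eq_mul, add_mul]

theorem hurwitz_of_lyapunov_general {n : ℕ}
    (A κ : Matrix (Fin n) (Fin n) ℝ)
    (hκpd : ∀ v : Fin n → ℝ, v ≠ 0 → 0 < v ⬝ᵥ κ.mulVec v)
    (hneg : ∀ x : Fin n → ℝ, x ≠ 0 → x ⬝ᵥ (Aᵀ * κ + κ * A).mulVec x < 0)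
    (μ : ℂ) (v : Fin n → ℂ) (hv : v ≠ 0)
    (heig : (A.map (Complex.ofReal)).mulVec v = μ • v) :
    μ.re < 0 := by
  have hκv := re_star_dotProduct_map_ofReal_mulVec_pos hκpd hv
  have hnegv := re_star_dotProduct_map_ofReal_mulVec_neg hneg hv
  have hmap : (Aᵀ * κ + κ * A).map Complex.ofReal =
      (A.map Complex.ofReal)ᴴ * κ.map Complex.ofReal +
        κ.map Complex.ofReal * A.map Complex.ofReal := by
    ext i j
    simp [mul_apply]
  rw [hmap, star_dotProduct_conjTranspose_mul_mulVec_of_eigenvector heig, Complex.star_def,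
    add_comm, Complex.add_conj, Complex.re_ofReal_mul] at hnegv
  linarith [neg_of_mul_neg_left hnegv hκv.le]

/-- If `κ` is symmetric positive definite and `Aᵀκ + κA` is negative definite, then every
complex eigenvalue of the real matrix `A` has strictly negative real part (`A` is Hurwitz). -/
theorem hurwitz_of_lyapunov {n : ℕ}
    (A κ : Matrix (Fin n) (Fin n) ℝ)
    (hκsymm : κᵀ = κ)
    (hκpd : ∀ v : Fin n → ℝ, v ≠ 0 → 0 < v ⬝ᵥ κ.mulVec v)
    (hneg : ∀ x : Fin n → ℝ, x ≠ 0 → x ⬝ᵥ (Aᵀ * κ + κ * A).mulVec x < 0)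
    (μ : ℂ) (v : Fin n → ℂ) (hv : v ≠ 0)
    (heig : (A.map (Complex.ofReal)).mulVec v = μ • v) :
    μ.re < 0 :=
  hurwitz_of_lyapunov_general A κ hκpd hneg μ v hv heig
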